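/- For the symmetric/asymmetric encryption derivability relation, the cut rule is admissible: if Γ ⊢ M and Γ ∪ {M} ⊢ N, then Γ ⊢ N. -/
import Mathlib

inductive Msg where
  | name : Nat → Msg
  | pair : Msg → Msg → Msg
  | senc : Msg → Msg → Msg
  | aenc : Msg → Msg → Msg
  | pub  : Msg → Msg
deriving DecidableEq

inductive Deriv : Finset Msg → Msg → Prop where
  | id {Γ M} : M ∈ Γ → Deriv Γ M
  | pub {Γ K} : Deriv Γ K → Deriv Γ (Msg.pub K)
  | pairL {Γ M N M'} : Msg.pair M N ∈ Γ → Deriv (Γ ∪ {M, N}) M' → Deriv Γ M'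
  | pairR {Γ M N} : Deriv Γ M → Deriv Γ N → Deriv Γ (Msg.pair M N)
  | sencL {Γ M K N} : Msg.senc M K ∈ Γ → Deriv Γ K → Deriv (Γ ∪ {M, K}) N → Deriv Γ N
  | sencR {Γ M K} : Deriv Γ M → Deriv Γ K → Deriv Γ (Msg.senc M K)
  | aencL {Γ M K N} : Msg.aenc M (Msg.pub K) ∈ Γ → Deriv Γ K → Deriv (Γ ∪ {M, K}) N → Deriv Γ N
  | aencR {Γ M N} : Deriv Γ M → Deriv Γ N → Deriv Γ (Msg.aenc M N)

lemma Deriv.weaken : ∀ {Γ N}, Deriv Γ N → ∀ {Γ'}, Γ ⊆ Γ' → Deriv Γ' N := by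
  intro Γ N d
  induction d with
  | id h => exact fun hs => .id (hs h)
  | pub _ ih => exact fun hs => .pub (ih hs)
  | pairL h _ ih =>
      exact fun hs => .pairL (hs h) (ih (Finset.union_subset_union hs (subset_refl _)))
  | pairR _ _ ih1 ih2 => exact fun hs => .pairR (ih1 hs) (ih2 hs)
  | sencL h _ _ ihK ihN =>
      exact fun hs => .sencL (hs h) (ihK hs) (ihN (Finset.union_subset_union hs (subset_refl _)))
  | sencR _ _ ih1 ih2 => exact fun hs => .sencR (ih1 hs) (ih2 hs)
  | aencL h _ _ ihK ihN =>
      exact fun hs => .aencL (hs h) (ihK hs) (ihN (Finset.union_subset_union hs (subset_refl _)))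
  | aencR _ _ ih1 ih2 => exact fun hs => .aencR (ih1 hs) (ih2 hs)

lemma mem_unAB {Γ : Finset Msg} {A B : Msg} (X : Msg) (h : X = A ∨ X = B) :
    X ∈ Γ ∪ {A, B} := by
  rcases h with rfl | rfl <;> simp

lemma pairInv : ∀ {Γ X}, Deriv Γ X → ∀ A B, X = Msg.pair A B →
    Deriv Γ A ∧ Deriv Γ B := by
  intro Γ X d
  induction d with
  | id h =>
      rintro A B rfl
      exact ⟨.pairL h (.id (mem_unAB A (Or.inl rfl))),
             .pairL h (.id (mem_unAB B (Or.inr rfl)))⟩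
  | pub _ _ => intro A B h; exact absurd h (by simp)
  | pairL h _ ih =>
      rintro A B rfl
      obtain ⟨hA, hB⟩ := ih A B rfl
      exact ⟨.pairL h hA, .pairL h hB⟩
  | pairR dM dN _ _ =>
      rintro A B hEq
      injection hEq with e1 e2; subst e1; subst e2
      exact ⟨dM, dN⟩
  | sencL h dK _ _ ih =>
      rintro A B rfl
      obtain ⟨hA, hB⟩ := ih A B rfl
      exact ⟨.sencL h dK hA, .sencL h dK hB⟩
  | sencR _ _ _ _ => intro A B h; exact absurd h (by simp)
  | aencL h dK _ _ ih =>
      rintro A B rfl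
      obtain ⟨hA, hB⟩ := ih A B rfl
      exact ⟨.aencL h dK hA, .aencL h dK hB⟩
  | aencR _ _ _ _ => intro A B h; exact absurd h (by simp)

lemma sencInv : ∀ {Γ X}, Deriv Γ X → ∀ A K, X = Msg.senc A K →
    Deriv Γ K → Deriv Γ A := by
  intro Γ X d
  induction d with
  | id h =>
      rintro A K rfl hK
      exact .sencL h hK (.id (mem_unAB A (Or.inl rfl)))
  | pub _ _ => intro A K h; exact absurd h (by simp)
  | pairL h _ ih =>
      rintro A K rfl hK
      exact .pairL h (ih A K rfl (hK.weaken Finset.subset_union_left))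
  | pairR _ _ _ _ => intro A K h; exact absurd h (by simp)
  | sencL h dK _ _ ih =>
      rintro A K rfl hK
      exact .sencL h dK (ih A K rfl (hK.weaken Finset.subset_union_left))
  | sencR dM dK _ _ =>
      rintro A K hEq _
      injection hEq with e1 e2; subst e1; subst e2
      exact dM
  | aencL h dK _ _ ih =>
      rintro A K rfl hK
      exact .aencL h dK (ih A K rfl (hK.weaken Finset.subset_union_left))
  | aencR _ _ _ _ => intro A K h; exact absurd h (by simp)

lemma aencInv : ∀ {Γ X}, Deriv Γ X → ∀ A K, X = Msg.aenc A (Msg.pub K) →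
    Deriv Γ K → Deriv Γ A := by
  intro Γ X d
  induction d with
  | id h =>
      rintro A K rfl hK
      exact .aencL h hK (.id (mem_unAB A (Or.inl rfl)))
  | pub _ _ => intro A K h; exact absurd h (by simp)
  | pairL h _ ih =>
      rintro A K rfl hK
      exact .pairL h (ih A K rfl (hK.weaken Finset.subset_union_left))
  | pairR _ _ _ _ => intro A K h; exact absurd h (by simp)
  | sencL h dK _ _ ih =>
      rintro A K rfl hK
      exact .sencL h dK (ih A K rfl (hK.weaken Finset.subset_union_left))
  | sencR _ _ _ _ => intro A K h; exact absurd h (by simp)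
  | aencL h dK _ _ ih =>
      rintro A K rfl hK
      exact .aencL h dK (ih A K rfl (hK.weaken Finset.subset_union_left))
  | aencR dM dN _ _ =>
      rintro A K hEq _
      injection hEq with e1 e2; subst e1; subst e2
      exact dM

lemma unAB_eq {Γ : Finset Msg} {A B : Msg} :
    Γ ∪ {A, B} = insert A (insert B Γ) := by
  ext x; simp [or_comm, or_left_comm]

lemma insert_union_pair {Γ : Finset Msg} {M A B : Msg} :
    insert M Γ ∪ {A, B} = insert M (Γ ∪ {A, B}) := Finset.insert_union _ _ _

lemma cutAux : ∀ (n : ℕ) (M : Msg), sizeOf M ≤ n → ∀ (Γ : Finset Msg) (N : Msg),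
    Deriv Γ M → Deriv (insert M Γ) N → Deriv Γ N := by
  intro n
  induction n using Nat.strong_induction_on with
  | _ n IHn =>
  intro M hM Γ N h1 h2
  -- generalize the context of h2
  have key : ∀ {Δ N}, Deriv Δ N → ∀ Γ, Δ = insert M Γ → Deriv Γ M → Deriv Γ N := by
    intro Δ N d
    induction d with
    | id h =>
        rintro Γ rfl h1
        rcases Finset.mem_insert.mp h with h | h
        · subst h; exact h1
        · exact .id h
    | pub _ ih =>
        rintro Γ rfl h1
        exact .pub (ih Γ rfl h1)
    | pairL h _ ih =>
        rintro Γ rfl h1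
        have hN := ih (Γ ∪ {_, _}) insert_union_pair
          (h1.weaken Finset.subset_union_left)
        rcases Finset.mem_insert.mp h with h | h
        · -- M is the pair
          obtain ⟨hA, hB⟩ := pairInv h1 _ _ h.symm
          rw [unAB_eq] at hN
          subst h
          have s1 : Deriv (insert _ Γ) _ :=
            IHn _ (by simp at hM; omega) _ (le_refl _) _ _
              (hA.weaken (Finset.subset_insert _ _)) hN
          exact IHn _ (by simp at hM; omega) _ (le_refl _) _ _ hB s1
        · exact .pairL h hN
    | pairR _ _ ih1 ih2 =>
        rintro Γ rfl h1
        exact .pairR (ih1 Γ rfl h1) (ih2 Γ rfl h1)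
    | sencL h _ _ ihK ihN =>
        rintro Γ rfl h1
        have hK := ihK Γ rfl h1
        have hN := ihN (Γ ∪ {_, _}) insert_union_pair
          (h1.weaken Finset.subset_union_left)
        rcases Finset.mem_insert.mp h with h | h
        · have hA := sencInv h1 _ _ h.symm hK
          rw [unAB_eq] at hN
          subst h
          have s1 : Deriv (insert _ Γ) _ :=
            IHn _ (by simp at hM; omega) _ (le_refl _) _ _
              (hA.weaken (Finset.subset_insert _ _)) hN
          exact IHn _ (by simp at hM; omega) _ (le_refl _) _ _ hK s1
        · exact .sencL h hK hN
    | sencR _ _ ih1 ih2 =>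
        rintro Γ rfl h1
        exact .sencR (ih1 Γ rfl h1) (ih2 Γ rfl h1)
    | aencL h _ _ ihK ihN =>
        rintro Γ rfl h1
        have hK := ihK Γ rfl h1
        have hN := ihN (Γ ∪ {_, _}) insert_union_pair
          (h1.weaken Finset.subset_union_left)
        rcases Finset.mem_insert.mp h with h | h
        · have hA := aencInv h1 _ _ h.symm hK
          rw [unAB_eq] at hN
          subst h
          have s1 : Deriv (insert _ Γ) _ :=
            IHn _ (by simp at hM; omega) _ (le_refl _) _ _
              (hA.weaken (Finset.subset_insert _ _)) hN
          exact IHn _ (by simp at hM; omega) _ (le_refl _) _ _ hK s1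
        · exact .aencL h hK hN
    | aencR _ _ ih1 ih2 =>
        rintro Γ rfl h1
        exact .aencR (ih1 Γ rfl h1) (ih2 Γ rfl h1)
  exact key h2 Γ rfl h1

theorem Deriv.cut {Γ : Finset Msg} {M N : Msg}
    (h1 : Deriv Γ M) (h2 : Deriv (insert M Γ) N) : Deriv Γ N :=
  cutAux (sizeOf M) M (le_refl _) Γ N h1 h2
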